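/- Let n ≥ 2 be an integer, σ > 0, 0 < r_- < r_+, and i ≠ j indices in {1,…,n}. For every 𝐱 ∈ 𝒜_g^σ with |x_i−x_j| = σ(x̌_i+x̌_j) and every 𝐲 ∈ 𝒟_{ij}, one has ⟨𝐲 − 𝐱, 𝐧_{ij}(𝐱)⟩ ≥ − ‖𝐲 − 𝐱‖² / (2 r_- √(2+2σ²)), where ⟨·,·⟩ is the Euclidean inner product on (ℝ³×ℝ)^n. -/

import Mathlib

open scoped RealInnerProductSpace

noncomputable section

/-- A globule: a point of `ℝ³ × ℝ` with the Euclidean (L²) norm;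
the first component is the center, the second the radius. -/
abbrev Glob : Type := WithLp 2 (EuclideanSpace ℝ (Fin 3) × ℝ)

/-- The configuration space of `n` globules, `(ℝ³ × ℝ)ⁿ` with the Euclidean norm. -/
abbrev Conf (n : ℕ) : Type := PiLp 2 (fun _ : Fin n => Glob)

/-- The center of the `i`-th globule. -/
def ctr {n : ℕ} (x : Conf n) (i : Fin n) : EuclideanSpace ℝ (Fin 3) :=
  (WithLp.equiv 2 (EuclideanSpace ℝ (Fin 3) × ℝ) (x i)).1

/-- The radius of the `i`-th globule. -/
def rad {n : ℕ} (x : Conf n) (i : Fin n) : ℝ :=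
  (WithLp.equiv 2 (EuclideanSpace ℝ (Fin 3) × ℝ) (x i)).2

/-- The vector `𝐰` at a configuration `x`: its `i`-th center component is
`(x_i - x_j)/(σ(x̌_i + x̌_j))`, its `j`-th center component is the opposite,
its radius components at `i` and `j` are `-σ`, all other components vanish. -/
def wvec (σ : ℝ) {n : ℕ} (i j : Fin n) (x : Conf n) : Conf n := WithLp.toLp 2 fun k =>
  (WithLp.equiv 2 (EuclideanSpace ℝ (Fin 3) × ℝ)).symm
    (if k = i then (σ * (rad x i + rad x j))⁻¹ • (ctr x i - ctr x j)
      else if k = j then (σ * (rad x i + rad x j))⁻¹ • (ctr x j - ctr x i)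
      else 0,
     if k = i ∨ k = j then -σ else 0)

/-- The inward normal vector `𝐧_{ij}(x) = 𝐰/√(2+2σ²)`. -/
def nvec (σ : ℝ) {n : ℕ} (i j : Fin n) (x : Conf n) : Conf n :=
  (Real.sqrt (2 + 2 * σ ^ 2))⁻¹ • wvec σ i j x

/-- The set `𝒟_{ij} = {𝐱 : |x_i - x_j| ≥ σ(x̌_i + x̌_j)}`. -/
def Dset (σ : ℝ) {n : ℕ} (i j : Fin n) : Set (Conf n) :=
  {x | σ * (rad x i + rad x j) ≤ ‖ctr x i - ctr x j‖}

/-- The set `𝒜_g^σ` of allowed (rescaled) configurations. -/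
def AgSet (σ rm rp : ℝ) (n : ℕ) : Set (Conf n) :=
  {x | (∀ i, rm / σ ≤ rad x i ∧ rad x i ≤ rp / σ) ∧
    ∀ i j : Fin n, i ≠ j → σ * (rad x i + rad x j) ≤ ‖ctr x i - ctr x j‖}

/-- The function `f(𝐱) = |x_i - x_j| - σ(x̌_i + x̌_j)`. -/
def fij (σ : ℝ) {n : ℕ} (i j : Fin n) (x : Conf n) : ℝ :=
  ‖ctr x i - ctr x j‖ - σ * (rad x i + rad x j)

end

/-! Write `a = x_i - x_j`, `b = y_i - y_j` and `s = σ(x̌_i + x̌_j) = |a|`. Since `y ∈ 𝒟_{ij}`,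
`⟨y - x, 𝐰⟩ = ⟨b, a⟩/s - σ(y̌_i + y̌_j) ≥ -(|a||b| - ⟨a, b⟩)/s`, and
`2(|a||b| - ⟨a, b⟩) ≤ |b - a|² ≤ 2‖y - x‖²`. Hence `⟨y - x, 𝐰⟩ ≥ -‖y - x‖²/s`, while `s ≥ 2r_-`
on `𝒜_g^σ`. -/

theorem two_mul_norm_mul_norm_sub_inner_le {E : Type*} [NormedAddCommGroup E]
    [InnerProductSpace ℝ E] (a b : E) : 2 * (‖a‖ * ‖b‖ - ⟪a, b⟫) ≤ ‖a - b‖ ^ 2 := by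
  rw [norm_sub_sq_real]
  nlinarith [sq_nonneg (‖a‖ - ‖b‖)]

section Conf

variable {n : ℕ}

@[simp]
theorem ctr_sub (x y : Conf n) (k : Fin n) : ctr (x - y) k = ctr x k - ctr y k := rfl

@[simp]
theorem rad_sub (x y : Conf n) (k : Fin n) : rad (x - y) k = rad x k - rad y k := rfl

theorem inner_eq_sum_ctr_rad (z w : Conf n) :
    ⟪z, w⟫ = ∑ k, (⟪ctr z k, ctr w k⟫ + rad z k * rad w k) := by
  refine Finset.sum_congr rfl fun k _ => ?_
  rw [WithLp.prod_inner_apply, Real.inner_apply]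
  rfl

theorem norm_sq_eq_sum_ctr_rad (z : Conf n) :
    ‖z‖ ^ 2 = ∑ k, (‖ctr z k‖ ^ 2 + rad z k ^ 2) := by
  simp only [PiLp.norm_sq_eq_of_L2, WithLp.prod_norm_sq_eq_of_L2, ctr, rad, Real.norm_eq_abs,
    sq_abs]
  rfl

theorem norm_ctr_sub_ctr_sq_le {i j : Fin n} (hij : i ≠ j) (z : Conf n) :
    ‖ctr z i - ctr z j‖ ^ 2 ≤ 2 * ‖z‖ ^ 2 := by
  have hpair : ‖ctr z i‖ ^ 2 + ‖ctr z j‖ ^ 2 ≤ ‖z‖ ^ 2 := by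
    rw [norm_sq_eq_sum_ctr_rad, ← Finset.sum_pair (f := fun k => ‖ctr z k‖ ^ 2) hij]
    exact (Finset.sum_le_sum_of_subset_of_nonneg (Finset.subset_univ _) fun k _ _ =>
      by positivity).trans (Finset.sum_le_sum fun k _ => le_add_of_nonneg_right (sq_nonneg _))
  nlinarith [parallelogram_law_with_norm ℝ (ctr z i) (ctr z j), sq_nonneg ‖ctr z i + ctr z j‖]

theorem ctr_wvec_left (σ : ℝ) (i j : Fin n) (x : Conf n) :
    ctr (wvec σ i j x) i = (σ * (rad x i + rad x j))⁻¹ • (ctr x i - ctr x j) := by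
  simp [ctr, wvec]

theorem ctr_wvec_right (σ : ℝ) {i j : Fin n} (hij : i ≠ j) (x : Conf n) :
    ctr (wvec σ i j x) j = -((σ * (rad x i + rad x j))⁻¹ • (ctr x i - ctr x j)) := by
  simp [ctr, wvec, hij.symm, ← smul_neg]

theorem rad_wvec_left (σ : ℝ) (i j : Fin n) (x : Conf n) : rad (wvec σ i j x) i = -σ := by
  simp [rad, wvec]

theorem rad_wvec_right (σ : ℝ) (i j : Fin n) (x : Conf n) : rad (wvec σ i j x) j = -σ := by
  simp [rad, wvec]

theorem inner_wvec (σ : ℝ) {i j : Fin n} (hij : i ≠ j) (x z : Conf n) :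
    ⟪z, wvec σ i j x⟫ = (σ * (rad x i + rad x j))⁻¹ * ⟪ctr z i - ctr z j, ctr x i - ctr x j⟫
      - σ * (rad z i + rad z j) := by
  rw [inner_eq_sum_ctr_rad, Fintype.sum_eq_add i j hij]
  · rw [ctr_wvec_left, ctr_wvec_right σ hij, rad_wvec_left, rad_wvec_right, inner_neg_right,
      inner_smul_right, inner_smul_right, inner_sub_left]
    ring
  · rintro k ⟨hki, hkj⟩
    simp [ctr, rad, wvec, hki, hkj]

theorem neg_norm_sq_div_le_inner_wvec {σ : ℝ} {i j : Fin n} (hij : i ≠ j) {x y : Conf n}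
    (hs : 0 < σ * (rad x i + rad x j)) (hc : ‖ctr x i - ctr x j‖ = σ * (rad x i + rad x j))
    (hy : y ∈ Dset σ i j) :
    -‖y - x‖ ^ 2 / (σ * (rad x i + rad x j)) ≤ ⟪y - x, wvec σ i j x⟫ := by
  set s := σ * (rad x i + rad x j)
  set a := ctr x i - ctr x j
  set b := ctr y i - ctr y j
  have hba : ctr (y - x) i - ctr (y - x) j = b - a := by simp only [ctr_sub, a, b]; abel
  have hnorm := norm_ctr_sub_ctr_sq_le hij (y - x)
  have hcone := two_mul_norm_mul_norm_sub_inner_le b a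
  rw [hba] at hnorm
  rw [hc] at hcone
  calc -‖y - x‖ ^ 2 / s ≤ -‖b - a‖ ^ 2 / (2 * s) := by
        rw [div_le_div_iff₀ hs (by positivity)]; nlinarith
    _ ≤ (⟪b, a⟫ - ‖b‖ * s) / s := by
        rw [div_le_div_iff₀ (by positivity) hs]; nlinarith
    _ ≤ (⟪b, a⟫ - σ * (rad y i + rad y j) * s) / s := by
        gcongr; exact hy
    _ = ⟪y - x, wvec σ i j x⟫ := by
        have hinner : ⟪b - a, a⟫ = ⟪b, a⟫ - s ^ 2 := by
          rw [inner_sub_left, real_inner_self_eq_norm_sq, hc]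
        rw [inner_wvec σ hij, hba, hinner, rad_sub, rad_sub]
        change _ = s⁻¹ * _ - _
        field_simp
        ring

end Conf

theorem le_mul_rad_of_mem_AgSet {σ rm rp : ℝ} (hσ : 0 < σ) {n : ℕ} {x : Conf n}
    (hx : x ∈ AgSet σ rm rp n) (k : Fin n) : rm ≤ σ * rad x k := by
  rw [mul_comm, ← div_le_iff₀ hσ]
  exact (hx.1 k).1

theorem inner_nvec (σ : ℝ) {n : ℕ} (i j : Fin n) (x z : Conf n) :
    ⟪z, nvec σ i j x⟫ = (Real.sqrt (2 + 2 * σ ^ 2))⁻¹ * ⟪z, wvec σ i j x⟫ :=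
  real_inner_smul_right _ _ _

theorem statement3_general (n : ℕ) (σ : ℝ) (hσ : 0 < σ) (rm rp : ℝ)
    (hrm : 0 < rm) (i j : Fin n) (hij : i ≠ j)
    (x : Conf n) (hx : x ∈ AgSet σ rm rp n)
    (hc : ‖ctr x i - ctr x j‖ = σ * (rad x i + rad x j))
    (y : Conf n) (hy : y ∈ Dset σ i j) :
    ⟪y - x, nvec σ i j x⟫ ≥ -‖y - x‖ ^ 2 / (2 * rm * Real.sqrt (2 + 2 * σ ^ 2)) := by
  have hs : 2 * rm ≤ σ * (rad x i + rad x j) := by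
    linarith [le_mul_rad_of_mem_AgSet hσ hx i, le_mul_rad_of_mem_AgSet hσ hx j]
  rw [ge_iff_le, inner_nvec, ← div_div, div_eq_inv_mul _ (Real.sqrt _)]
  gcongr
  calc -‖y - x‖ ^ 2 / (2 * rm) ≤ -‖y - x‖ ^ 2 / (σ * (rad x i + rad x j)) := by
        rw [neg_div, neg_div, neg_le_neg_iff]; gcongr
    _ ≤ ⟪y - x, wvec σ i j x⟫ := neg_norm_sq_div_le_inner_wvec hij (by linarith) hc hy

theorem statement3 (n : ℕ) (hn : 2 ≤ n) (σ : ℝ) (hσ : 0 < σ) (rm rp : ℝ)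
    (hrm : 0 < rm) (hrmp : rm < rp) (i j : Fin n) (hij : i ≠ j)
    (x : Conf n) (hx : x ∈ AgSet σ rm rp n)
    (hc : ‖ctr x i - ctr x j‖ = σ * (rad x i + rad x j))
    (y : Conf n) (hy : y ∈ Dset σ i j) :
    ⟪y - x, nvec σ i j x⟫ ≥ -‖y - x‖ ^ 2 / (2 * rm * Real.sqrt (2 + 2 * σ ^ 2)) :=
  statement3_general n σ hσ rm rp hrm i j hij x hx hc y hy
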